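/- arXiv:2512.12215 — 4 statements merged into one kernel-verified Lean document; each statement's English description precedes it below -/
import Mathlib

section
/- Let V be a finite vertex set and let G be a simple graph on V. Suppose some connected component of G is a tree, i.e., there is a vertex v such that no vertex reachable from v in G lies on a cycle of G. Then G is not admissible: there exists a nonzero function f : V → ℂ with f(u) + f(w) = 0 for every edge {u, w} of G. -/
/-!
The component `C` of `v` is connected and, by hypothesis, acyclic, so it is a tree and hence
bipartite. The function equal to `1` on one colour class of `C`, to `-1` on the other, and to `0`
off `C` is nonzero and has vanishing sums along every edge, since no edge leaves `C`.
-/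

open SimpleGraph

lemma Fin.neg_one_pow_add_neg_one_pow_of_ne {R : Type*} [Ring R] {a b : Fin 2} (h : a ≠ b) :
    (-1 : R) ^ (a : ℕ) + (-1) ^ (b : ℕ) = 0 := by
  fin_cases a <;> fin_cases b <;> simp_all

namespace SimpleGraph.ConnectedComponent

variable {V : Type*} {G : SimpleGraph V} (C : G.ConnectedComponent)

lemma isTree_toSimpleGraph (hC : ∀ u ∈ C, ∀ c : G.Walk u u, ¬ c.IsCycle) :
    C.toSimpleGraph.IsTree where
  connected := C.connected_toSimpleGraph
  isAcyclic u _ hc := hC u u.2 _ (hc.map (f := C.toSimpleGraph_hom) Subtype.val_injective)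

lemma exists_ne_zero_forall_adj_add_eq_zero_of_isBipartite {R : Type*} [Ring R] [Nontrivial R]
    (hC : C.toSimpleGraph.IsBipartite) :
    ∃ f : V → R, f ≠ 0 ∧ ∀ u w : V, G.Adj u w → f u + f w = 0 := by
  classical
  obtain ⟨c⟩ := hC
  let f : V → R := fun u ↦ if hu : u ∈ C then (-1) ^ (c ⟨u, hu⟩ : ℕ) else 0
  refine ⟨f, fun hf ↦ ?_, fun u w huw ↦ ?_⟩
  · obtain ⟨u, hu⟩ := C.nonempty_supp
    have hfu : f u = (-1) ^ (c ⟨u, hu⟩ : ℕ) := dif_pos hu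
    exact (isUnit_neg_one.pow _).ne_zero (hfu ▸ congrFun hf u)
  · by_cases hu : u ∈ C
    · have hw : w ∈ C := (C.mem_supp_congr_adj huw).mp hu
      have hcol : c ⟨u, hu⟩ ≠ c ⟨w, hw⟩ := c.valid ((C.toSimpleGraph_adj hu hw).mpr huw)
      simpa only [f, dif_pos hu, dif_pos hw] using Fin.neg_one_pow_add_neg_one_pow_of_ne hcol
    · have hw : w ∉ C := fun hw ↦ hu ((C.mem_supp_congr_adj huw).mpr hw)
      simp only [f, dif_neg hu, dif_neg hw, add_zero]

end SimpleGraph.ConnectedComponent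

theorem stmt_1_general {V : Type*} (G : SimpleGraph V)
    (v : V)
    (hv : ∀ u : V, G.Reachable v u → ¬ ∃ c : G.Walk u u, c.IsCycle) :
    ∃ f : V → ℂ, f ≠ 0 ∧ ∀ u w : V, G.Adj u w → f u + f w = 0 := by
  let C := G.connectedComponentMk v
  have hC : C.toSimpleGraph.IsTree := C.isTree_toSimpleGraph fun u hu c hc ↦
    hv u (ConnectedComponent.exact hu).symm ⟨c, hc⟩
  exact C.exists_ne_zero_forall_adj_add_eq_zero_of_isBipartite hC.isBipartite

/-- If some connected component of `G` is a tree (there is a vertex `v`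
such that no vertex reachable from `v` lies on a cycle of `G`), then `G` is not
admissible. -/
theorem stmt_1 {V : Type*} [Fintype V] (G : SimpleGraph V)
    (v : V)
    (hv : ∀ u : V, G.Reachable v u → ¬ ∃ c : G.Walk u u, c.IsCycle) :
    ∃ f : V → ℂ, f ≠ 0 ∧ ∀ u w : V, G.Adj u w → f u + f w = 0 :=
  stmt_1_general G v hv
end

section
/- Let V be a finite vertex set and let G be a simple graph on V satisfying: (1) every vertex of V lies on at least one edge of G; (2) G contains no even cycle (every cycle of G has odd length); and (3) no connected component of G is a tree (every vertex of V can reach, within its component, some vertex lying on a cycle of G). Then G is admissible: the only function f : V → ℂ with f(u) + f(v) = 0 for every edge {u, v} of G is the zero function. -/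
/-!
Along an edge `{u, w}` the relation `f u + f w = 0` flips the sign of `f`, so along a walk of
length `n` the value changes by `(-1) ^ n`. Going once around an odd cycle through `u` gives
`f u = -f u`, hence `f u = 0`; and since every component contains a cycle, and all cycles are
odd, `f` vanishes on every component.
-/

namespace SimpleGraph

variable {V A : Type*} {G : SimpleGraph V} [AddGroup A] {f : V → A}

theorem Walk.apply_eq_neg_one_pow_length_zsmul (hf : ∀ u w, G.Adj u w → f u + f w = 0)
    {v u : V} (p : G.Walk v u) : f v = (-1 : ℤ) ^ p.length • f u := by
  induction p with
  | nil => simp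
  | cons hvw p ih =>
    rw [length_cons, pow_succ, mul_neg_one, neg_zsmul, ← ih]
    exact eq_neg_of_add_eq_zero_left (hf _ _ hvw)

theorem Walk.apply_eq_zero_of_odd_length [IsAddTorsionFree A]
    (hf : ∀ u w, G.Adj u w → f u + f w = 0) {u : V} (c : G.Walk u u) (hc : Odd c.length) :
    f u = 0 := by
  have h := c.apply_eq_neg_one_pow_length_zsmul hf
  rwa [hc.neg_one_pow, neg_one_zsmul, self_eq_neg] at h

theorem Reachable.apply_eq_zero_iff (hf : ∀ u w, G.Adj u w → f u + f w = 0) {v u : V}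
    (h : G.Reachable v u) : f v = 0 ↔ f u = 0 := by
  obtain ⟨p⟩ := h
  rw [p.apply_eq_neg_one_pow_length_zsmul hf]
  rcases neg_one_pow_eq_or ℤ p.length with h | h <;> simp [h]

end SimpleGraph

theorem stmt_4_general {V : Type*} (G : SimpleGraph V)
    (h2 : ∀ (v : V) (c : G.Walk v v), c.IsCycle → Odd c.length)
    (h3 : ∀ v : V, ∃ u : V, G.Reachable v u ∧ ∃ c : G.Walk u u, c.IsCycle)
    (f : V → ℂ) (hf : ∀ u w : V, G.Adj u w → f u + f w = 0) :
    f = 0 := by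
  funext v
  obtain ⟨u, hvu, c, hc⟩ := h3 v
  exact (hvu.apply_eq_zero_iff hf).mpr (c.apply_eq_zero_of_odd_length hf (h2 u c hc))

/-- If every vertex lies on an edge, `G` has no even cycle, and no
connected component of `G` is a tree (every vertex can reach a vertex lying on a
cycle), then `G` is admissible. -/
theorem stmt_4 {V : Type*} [Fintype V] (G : SimpleGraph V)
    (h1 : ∀ v : V, ∃ u : V, G.Adj v u)
    (h2 : ∀ (v : V) (c : G.Walk v v), c.IsCycle → Odd c.length)
    (h3 : ∀ v : V, ∃ u : V, G.Reachable v u ∧ ∃ c : G.Walk u u, c.IsCycle)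
    (f : V → ℂ) (hf : ∀ u w : V, G.Adj u w → f u + f w = 0) :
    f = 0 :=
  stmt_4_general G h2 h3 f hf
end

section
/- Let V be a finite vertex set and let G be a simple graph on V whose number of edges is at most the number of vertices of V. Suppose some connected component of G contains two distinct odd cycles; that is, there exist cycles p and q in G, both of odd length, whose edge sets are different, and whose base vertices lie in the same connected component of G. Then G is not admissible: there exists a nonzero function f : V → ℂ with f(u) + f(v) = 0 for every edge {u, v} of G. -/
/-!
If the edge-sum map `f ↦ (f a + f b)_{ab}` were injective, then, having at most as many edges
as vertices, it would also be surjective. Pick an edge `e₀` lying on one odd cycle `p` but not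
on the other, `q`, and let `f` have edge sums `δ_{e₀}`. Going around the odd cycle `q`, whose
edge sums all vanish, flips the sign of `f v`, so `f v = 0`; as all edge sums are integers,
`f` is then integer-valued on the component of `v`. But summing the edge sums around `p` gives
`1 = 2 ∑_{x ∈ p} f x`, which is even.
-/

theorem Pi.single_one_apply_mem_bot {α R : Type*} [DecidableEq α] [Ring R] (a b : α) :
    (Pi.single a 1 : α → R) b ∈ (⊥ : Subring R) := by
  rw [Pi.single_apply]
  split_ifs
  exacts [one_mem _, zero_mem _]

namespace SimpleGraph

variable {V : Type*} {G : SimpleGraph V}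

section Walk

variable {R : Type*} [CommRing R] {f : V → R} {g : Sym2 V → R}

theorem Walk.sum_map_edges_eq (hf : ∀ a b, G.Adj a b → f a + f b = g s(a, b)) {a b : V}
    (w : G.Walk a b) :
    (w.edges.map g).sum = f a - f b + 2 * (w.support.tail.map f).sum := by
  induction w with
  | nil => simp
  | cons h w ih =>
    rw [Walk.edges_cons, List.map_cons, List.sum_cons, ih, ← hf _ _ h, Walk.support_cons,
      List.tail_cons, ← w.cons_tail_support, List.map_cons, List.sum_cons, List.tail_cons]
    ring

theorem Walk.apply_eq_neg_one_pow_mul (hf : ∀ a b, G.Adj a b → f a + f b = g s(a, b))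
    {a b : V} (w : G.Walk a b) (hw : ∀ e ∈ w.edges, g e = 0) :
    f a = (-1) ^ w.length * f b := by
  induction w with
  | nil => simp
  | cons h w ih =>
    simp only [Walk.edges_cons, List.mem_cons, forall_eq_or_imp] at hw
    rw [Walk.length_cons]
    linear_combination (hf _ _ h).trans hw.1 - ih hw.2

theorem Walk.apply_mem_of_apply_mem {S : Type*} [SetLike S R] [AddSubgroupClass S R] {s : S}
    (hf : ∀ a b, G.Adj a b → f a + f b = g s(a, b)) {a b : V} (w : G.Walk a b)
    (hw : ∀ e ∈ w.edges, g e ∈ s) (ha : f a ∈ s) : f b ∈ s := by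
  induction w with
  | nil => exact ha
  | cons h w ih =>
    simp only [Walk.edges_cons, List.mem_cons, forall_eq_or_imp] at hw
    refine ih hw.2 ?_
    rw [eq_sub_of_add_eq' (hf _ _ h)]
    exact sub_mem hw.1 ha

end Walk

section OddCycle

variable {K : Type*} [Field K] [CharZero K] [DecidableEq V] {f : V → K} {e₀ : Sym2 V}

theorem not_forall_adj_add_eq_single {u v : V} {p : G.Walk u u} {q : G.Walk v v}
    (hp : p.IsTrail) (hpe : e₀ ∈ p.edges) (hq : Odd q.length) (hqe : e₀ ∉ q.edges)
    (huv : G.Reachable u v) :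
    ¬ ∀ a b, G.Adj a b → f a + f b = (Pi.single e₀ 1 : Sym2 V → K) s(a, b) := by
  intro hf
  have hv : f v = 0 := by
    have := q.apply_eq_neg_one_pow_mul hf fun e he =>
      Pi.single_eq_of_ne (ne_of_mem_of_not_mem he hqe) _
    rw [hq.neg_one_pow, neg_one_mul] at this
    exact CharZero.eq_neg_self_iff.1 this
  have hint : ∀ x ∈ p.support, f x ∈ (⊥ : Subring K) := fun x hx =>
    (huv.symm.trans ⟨p.takeUntil x hx⟩).some.apply_mem_of_apply_mem hf
      (fun e _ => Pi.single_one_apply_mem_bot _ e) (hv ▸ zero_mem _)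
  -- Each vertex of the closed trail `p` is counted twice, and `e₀` exactly once.
  have hsum := p.sum_map_edges_eq hf
  rw [sub_self, zero_add, ← List.sum_toFinset _ hp.edges_nodup, Finset.sum_pi_single',
    if_pos (List.mem_toFinset.2 hpe)] at hsum
  obtain ⟨n, hn⟩ := Subring.mem_bot.1 <| list_sum_mem <| List.forall_mem_map.2 fun x hx =>
    hint x (List.mem_of_mem_tail hx)
  rw [← hn] at hsum
  have : (1 : ℤ) = 2 * n := by exact_mod_cast hsum
  omega

end OddCycle

section EdgeSumMap

variable (K : Type*) [Field K] (G)

def edgeSumMap : (V → K) →ₗ[K] (G.edgeSet → K) where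
  toFun f e := Sym2.lift ⟨fun a b => f a + f b, fun _ _ => add_comm _ _⟩ e
  map_add' f g := by
    ext ⟨e, _⟩
    induction e using Sym2.ind
    simp only [Sym2.lift_mk, Pi.add_apply]
    ring
  map_smul' c f := by
    ext ⟨e, _⟩
    induction e using Sym2.ind
    simp only [Sym2.lift_mk, Pi.smul_apply, smul_eq_mul, RingHom.id_apply]
    ring

variable {K G}

theorem edgeSumMap_eq_iff {f : V → K} {g : G.edgeSet → K} :
    G.edgeSumMap K f = g ↔ ∀ a b (h : G.Adj a b), f a + f b = g ⟨s(a, b), h⟩ := by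
  refine ⟨fun hf a b h => hf ▸ rfl, fun hf => ?_⟩
  ext ⟨e, he⟩
  induction e using Sym2.ind
  exact hf _ _ he

theorem edgeSumMap_surjective_of_injective [Fintype V]
    (hcard : G.edgeSet.ncard ≤ Fintype.card V) (hinj : Function.Injective (G.edgeSumMap K)) :
    Function.Surjective (G.edgeSumMap K) := by
  have : Fintype G.edgeSet := Fintype.ofFinite _
  refine (LinearMap.injective_iff_surjective_of_finrank_eq_finrank ?_).1 hinj
  refine le_antisymm (LinearMap.finrank_le_finrank_of_injective hinj) ?_
  rwa [Module.finrank_pi, Module.finrank_pi, ← Nat.card_eq_fintype_card, Nat.card_coe_set_eq]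

theorem edgeSumMap_not_surjective [CharZero K] [DecidableEq V] {u v : V} {p : G.Walk u u}
    {q : G.Walk v v} (hp : p.IsTrail) (hq : q.IsTrail) (hpodd : Odd p.length)
    (hqodd : Odd q.length) (hne : p.edges.toFinset ≠ q.edges.toFinset) (huv : G.Reachable u v) :
    ¬ Function.Surjective (G.edgeSumMap K) := by
  intro hsurj
  obtain ⟨e₀, he₀⟩ : ∃ e₀, e₀ ∈ p.edges ∧ e₀ ∉ q.edges ∨ e₀ ∈ q.edges ∧ e₀ ∉ p.edges := by
    by_contra! h
    exact hne <| Finset.ext fun e => by simpa only [List.mem_toFinset] using ⟨(h e).1, (h e).2⟩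
  obtain ⟨f, hf⟩ := hsurj fun e => (Pi.single e₀ 1 : Sym2 V → K) e
  have hf' := edgeSumMap_eq_iff.1 hf
  rcases he₀ with ⟨hpe, hqe⟩ | ⟨hqe, hpe⟩
  · exact not_forall_adj_add_eq_single hp hpe hqodd hqe huv hf'
  · exact not_forall_adj_add_eq_single hq hqe hpodd hpe huv.symm hf'

end EdgeSumMap

end SimpleGraph

open SimpleGraph

/-- If `G` has at most as many edges as vertices and some connected
component contains two distinct odd cycles (cycles of odd length with different edge
sets whose base vertices are in the same component), then `G` is not admissible. -/
theorem stmt_5 {V : Type*} [Fintype V] [DecidableEq V] (G : SimpleGraph V)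
    (hcard : G.edgeSet.ncard ≤ Fintype.card V)
    (u v : V) (p : G.Walk u u) (q : G.Walk v v)
    (hp : p.IsCycle) (hq : q.IsCycle)
    (hpodd : Odd p.length) (hqodd : Odd q.length)
    (hne : p.edges.toFinset ≠ q.edges.toFinset)
    (hreach : G.Reachable u v) :
    ∃ f : V → ℂ, f ≠ 0 ∧ ∀ a b : V, G.Adj a b → f a + f b = 0 := by
  have hsurj := edgeSumMap_not_surjective (K := ℂ) hp.isTrail hq.isTrail hpodd hqodd hne hreach
  obtain ⟨f, hf0, hf⟩ : ∃ f, f ≠ 0 ∧ G.edgeSumMap ℂ f = 0 := by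
    by_contra! h
    exact hsurj <| edgeSumMap_surjective_of_injective hcard <|
      (injective_iff_map_eq_zero _).2 fun f hf => by_contra fun hf0 => h f hf0 hf
  exact ⟨f, hf0, fun a b hab => edgeSumMap_eq_iff.1 hf a b hab⟩
end

section
/- Let V be a finite vertex set and let G be an admissible simple graph on V whose number of edges equals the number of vertices of V. Then every cycle of G has odd length, and every connected component of G contains a cycle (equivalently, each connected component consists of a single odd cycle together with trees attached to its vertices). -/
/-!
Admissibility says that the edge-sum map `R^V → R^E` is injective, so over a field `|V| ≤ |E|`.
If `G` had an even cycle, deleting one of its edges `uw` would keep `G` admissible: the rest of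
the cycle is an odd path from `u` to `w`, along which `f` alternates in sign, so it already forces
`f u + f w = 0`. This contradicts `|E| = |V|`. A component without a cycle is a tree, hence
bipartite, and `±1` on its two colour classes (and `0` elsewhere) has vanishing edge sums.
-/

namespace SimpleGraph

variable {V : Type*} {G : SimpleGraph V}

def IsAdmissible (R : Type*) [Ring R] (G : SimpleGraph V) : Prop :=
  ∀ f : V → R, (∀ u w : V, G.Adj u w → f u + f w = 0) → f = 0

def xRay (R : Type*) [CommRing R] (G : SimpleGraph V) : (V → R) →ₗ[R] (G.edgeSet → R) where
  toFun f e := Sym2.lift ⟨fun a b => f a + f b, fun _ _ => add_comm _ _⟩ e.1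
  map_add' f g := by
    ext ⟨e, _⟩
    induction e using Sym2.ind
    simp only [Sym2.lift_mk, Pi.add_apply]
    abel
  map_smul' c f := by
    ext ⟨e, _⟩
    induction e using Sym2.ind
    simp only [Sym2.lift_mk, Pi.smul_apply, smul_eq_mul, RingHom.id_apply, mul_add]

theorem xRay_apply_mk {R : Type*} [CommRing R] (f : V → R) {u w : V} (h : G.Adj u w) :
    xRay R G f ⟨s(u, w), h⟩ = f u + f w :=
  rfl

theorem IsAdmissible.injective_xRay {R : Type*} [CommRing R] (hG : G.IsAdmissible R) :
    Function.Injective (xRay R G) := by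
  refine (injective_iff_map_eq_zero _).mpr fun f hf => hG f fun u w h => ?_
  rw [← xRay_apply_mk f h, hf, Pi.zero_apply]

theorem IsAdmissible.card_le_ncard_edgeSet [Fintype V] {K : Type*} [Field K]
    (hG : G.IsAdmissible K) : Fintype.card V ≤ G.edgeSet.ncard := by
  classical
  have := LinearMap.finrank_le_finrank_of_injective hG.injective_xRay
  rw [Module.finrank_fintype_fun_eq_card, Module.finrank_fintype_fun_eq_card] at this
  rwa [Set.ncard_eq_toFinset_card', Set.toFinset_card]

theorem Walk.apply_eq_neg_one_pow_length_mul {R : Type*} [Ring R] {f : V → R}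
    (hf : ∀ u w : V, G.Adj u w → f u + f w = 0) {u w : V} (p : G.Walk u w) :
    f w = (-1) ^ p.length * f u := by
  induction p with
  | nil => simp
  | @cons a b c h p ih =>
    rw [ih, eq_neg_of_add_eq_zero_right (hf a b h), length_cons, pow_succ, mul_neg_one,
      neg_mul, mul_neg]

theorem IsAdmissible.deleteEdges_of_odd_walk {R : Type*} [Ring R] (hG : G.IsAdmissible R)
    {u w : V} (p : (G.deleteEdges {s(u, w)}).Walk u w) (hp : Odd p.length) :
    (G.deleteEdges {s(u, w)}).IsAdmissible R := by
  intro f hf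
  refine hG f fun a b hab => ?_
  by_cases he : s(a, b) = s(u, w)
  · have huw : f u + f w = 0 := by
      rw [p.apply_eq_neg_one_pow_length_mul hf, hp.neg_one_pow, neg_one_mul, add_neg_cancel]
    rcases Sym2.eq_iff.mp he with ⟨rfl, rfl⟩ | ⟨rfl, rfl⟩
    · exact huw
    · rwa [add_comm]
  · exact hf a b (deleteEdges_adj.mpr ⟨hab, he⟩)

theorem IsAdmissible.odd_length_of_isCycle [Fintype V] {K : Type*} [Field K]
    (hG : G.IsAdmissible K) (hE : G.edgeSet.ncard ≤ Fintype.card V) {v : V} {c : G.Walk v v}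
    (hc : c.IsCycle) : Odd c.length := by
  cases c with
  | nil => exact absurd rfl hc.ne_nil
  | @cons _ b _ h q =>
    obtain ⟨-, hq⟩ := (Walk.cons_isCycle_iff q h).mp hc
    by_contra hodd
    have hq_odd : Odd q.reverse.length := by
      simpa [Nat.even_add_one] using hodd
    let q' := q.reverse.toDeleteEdge s(v, b) (by simpa using hq)
    have := (hG.deleteEdges_of_odd_walk q' (by simpa [q'] using hq_odd)).card_le_ncard_edgeSet
    have hvb : s(v, b) ∈ G.edgeSet := h
    rw [edgeSet_deleteEdges, Set.ncard_sdiff_singleton_of_mem hvb] at this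
    have : 0 < Fintype.card V := Fintype.card_pos_iff.mpr ⟨v⟩
    omega

theorem IsAdmissible.not_colorable_two_toSimpleGraph {R : Type*} [Ring R] [Nontrivial R]
    (hG : G.IsAdmissible R) (C : G.ConnectedComponent) : ¬ C.toSimpleGraph.Colorable 2 := by
  rintro ⟨c⟩
  classical
  let f : V → R := fun u => if hu : u ∈ C.supp then (-1) ^ (c ⟨u, hu⟩ : ℕ) else 0
  have hf : ∀ u w : V, G.Adj u w → f u + f w = 0 := by
    intro u w huw
    by_cases hu : u ∈ C.supp
    · have hw : w ∈ C.supp := C.mem_supp_of_adj_mem_supp hu huw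
      have hne := c.valid ((C.toSimpleGraph_adj hu hw).mpr huw)
      simp only [f, dif_pos hu, dif_pos hw]
      generalize c ⟨u, hu⟩ = i, c ⟨w, hw⟩ = j at hne
      fin_cases i <;> fin_cases j <;> simp_all
    · have hw : w ∉ C.supp := fun hw => hu (C.mem_supp_of_adj_mem_supp hw huw.symm)
      simp only [f, dif_neg hu, dif_neg hw, add_zero]
  obtain ⟨v, hv⟩ := C.nonempty_supp
  have := congrFun (hG f hf) v
  simp only [Pi.zero_apply, f, dif_pos hv] at this
  exact (isUnit_neg_one.pow _).ne_zero this

theorem IsAdmissible.exists_reachable_isCycle {R : Type*} [Ring R] [Nontrivial R]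
    (hG : G.IsAdmissible R) (v : V) : ∃ u, G.Reachable v u ∧ ∃ c : G.Walk u u, c.IsCycle := by
  let C := G.connectedComponentMk v
  have hC : ¬ C.toSimpleGraph.IsAcyclic := fun h =>
    hG.not_colorable_two_toSimpleGraph C h.colorable_two
  obtain ⟨u, c, hc⟩ : ∃ (u : C) (c : C.toSimpleGraph.Walk u u), c.IsCycle := by
    simpa [IsAcyclic] using hC
  exact ⟨u, C.reachable_of_mem_supp ConnectedComponent.connectedComponentMk_mem u.2,
    c.map C.toSimpleGraph_hom, hc.map Subtype.val_injective⟩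

end SimpleGraph

/-- If `G` is admissible and its number of edges equals its number of
vertices, then every cycle of `G` is odd and every connected component of `G`
contains a cycle. -/
theorem stmt_6 {V : Type*} [Fintype V] (G : SimpleGraph V)
    (hadm : ∀ f : V → ℂ, (∀ u w : V, G.Adj u w → f u + f w = 0) → f = 0)
    (hcard : G.edgeSet.ncard = Fintype.card V) :
    (∀ (v : V) (c : G.Walk v v), c.IsCycle → Odd c.length) ∧
    (∀ v : V, ∃ u : V, G.Reachable v u ∧ ∃ c : G.Walk u u, c.IsCycle) :=
  have hG : G.IsAdmissible ℂ := hadm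
  ⟨fun _ _ hc => hG.odd_length_of_isCycle hcard.le hc, hG.exists_reachable_isCycle⟩
end
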